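/- arXiv:2102.01310 — 2 statements merged into one kernel-verified Lean document; each statement's English description precedes it below -/
import Mathlib

section
/- (Lemma on false alarm classes.) Let T be a positive-integer-valued random variable, m a positive integer, and 0 < \alpha < 1. If \sup_{\ell \ge 0} P(T \le \ell + m \mid T > \ell) \le \alpha, then E[T] \ge 3/2 + (m/\alpha)(1 - (3/2)\alpha). -/
/-!
Write `p n = P(T > n)`. The false-alarm constraint says exactly that `(1 - α) p ℓ ≤ p (ℓ + m)`,
so along each residue class `i + km` the survival function dominates the geometric sequence
`(1 - α)^k p i`. Summing over `k` and over the residues `i < m` gives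
`E[T] = ∑ₙ p n ≥ α⁻¹ ∑_{i<m} p i`. Since `T ≥ 1`, `p 0 = 1`, and `p i ≥ p m ≥ 1 - α` for
`0 < i < m`, whence `E[T] ≥ (1 + (m - 1)(1 - α)) / α`, which exceeds the claimed bound by `(m - 1)/2`.
-/

open MeasureTheory ENNReal

lemma tsum_ite_lt_eq_natCast (k : ℕ) : ∑' n : ℕ, (if n < k then (1 : ℝ≥0∞) else 0) = k := by
  rw [tsum_eq_sum (s := Finset.range k) fun n hn => by simpa using hn,
    Finset.sum_ite_of_true fun n hn => Finset.mem_range.mp hn]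
  simp

lemma lintegral_natCast_eq_tsum_measure_lt {Ω : Type*} [MeasurableSpace Ω] (μ : Measure Ω)
    {T : Ω → ℕ} (hT : Measurable T) :
    ∫⁻ ω, (T ω : ℝ≥0∞) ∂μ = ∑' n : ℕ, μ {ω | n < T ω} := by
  have hmeas (n : ℕ) : MeasurableSet {ω | n < T ω} := measurableSet_lt measurable_const hT
  calc ∫⁻ ω, (T ω : ℝ≥0∞) ∂μ = ∫⁻ ω, ∑' n : ℕ, {ω | n < T ω}.indicator 1 ω ∂μ := by
        congr with ω
        simp only [Set.indicator_apply, Set.mem_ofPred_eq, Pi.one_apply, tsum_ite_lt_eq_natCast]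
    _ = ∑' n : ℕ, μ {ω | n < T ω} := by
        rw [lintegral_tsum fun n => (measurable_one.indicator (hmeas n)).aemeasurable]
        simp_rw [lintegral_indicator_one (hmeas _)]

lemma one_sub_mul_measure_le_of_measure_diff_le {Ω : Type*} [MeasurableSpace Ω] {μ : Measure Ω}
    [IsFiniteMeasure μ] {s t : Set Ω} {a : ℝ≥0∞} (h : μ (s \ t) ≤ a * μ s) :
    (1 - a) * μ s ≤ μ t := by
  rw [ENNReal.sub_mul fun _ _ => measure_ne_top μ s, one_mul, tsub_le_iff_right]
  calc μ s ≤ μ (s ∩ t) + μ (s \ t) := measure_le_inter_add_sdiff μ s t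
    _ ≤ μ t + a * μ s := add_le_add (measure_mono Set.inter_subset_right) h

lemma injective_fin_val_add_mul (m : ℕ) :
    Function.Injective fun x : Fin m × ℕ => (x.1 : ℕ) + x.2 * m := by
  rintro ⟨i, k⟩ ⟨j, l⟩ h
  have hm : 0 < m := i.pos
  have hkl : k = l := by
    simpa [Nat.add_mul_div_right _ _ hm, Nat.div_eq_of_lt i.isLt, Nat.div_eq_of_lt j.isLt]
      using congrArg (· / m) h
  subst hkl
  simp only [Nat.add_right_cancel_iff, Fin.val_inj] at h
  rw [h]

section Shift

variable {p : ℕ → ℝ≥0∞} {c : ℝ≥0∞} {m : ℕ}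

lemma pow_mul_le_apply_add_mul (h : ∀ n, c * p n ≤ p (n + m)) (i k : ℕ) :
    c ^ k * p i ≤ p (i + k * m) := by
  induction k with
  | zero => simp
  | succ k ih =>
    calc c ^ (k + 1) * p i = c * (c ^ k * p i) := by ring
      _ ≤ c * p (i + k * m) := by gcongr
      _ ≤ p (i + (k + 1) * m) := by simpa [add_mul, add_assoc] using h (i + k * m)

lemma inv_one_sub_mul_sum_range_le_tsum (h : ∀ n, c * p n ≤ p (n + m)) :
    (1 - c)⁻¹ * ∑ i ∈ Finset.range m, p i ≤ ∑' n, p n := by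
  calc (1 - c)⁻¹ * ∑ i ∈ Finset.range m, p i = ∑ i ∈ Finset.range m, ∑' k, c ^ k * p i := by
        simp_rw [← ENNReal.tsum_geometric, Finset.mul_sum, ENNReal.tsum_mul_right]
    _ ≤ ∑ i ∈ Finset.range m, ∑' k, p (i + k * m) := by
        gcongr with i _ k
        exact pow_mul_le_apply_add_mul h i k
    _ = ∑' x : Fin m × ℕ, p (x.1 + x.2 * m) := by
        rw [ENNReal.tsum_prod (f := fun (i : Fin m) k => p (i + k * m)), tsum_fintype,
          Finset.sum_range]
    _ ≤ ∑' n, p n := tsum_comp_le_tsum_of_injective (injective_fin_val_add_mul m) p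

end Shift

lemma add_nsmul_le_sum_range_succ_of_antitone {M : Type*} [AddCommMonoid M] [PartialOrder M]
    [IsOrderedAddMonoid M] {p : ℕ → M} (hp : Antitone p) (k : ℕ) :
    p 0 + k • p k ≤ ∑ i ∈ Finset.range (k + 1), p i := by
  rw [Finset.sum_range_succ', add_comm]
  gcongr
  calc k • p k = ∑ _i ∈ Finset.range k, p k := by simp
    _ ≤ ∑ i ∈ Finset.range k, p (i + 1) :=
        Finset.sum_le_sum fun i hi => hp (by simp only [Finset.mem_range] at hi; omega)

lemma ofReal_le_inv_mul_one_add_mul_one_sub {α : ℝ} (hα0 : 0 < α) (hα1 : α < 1) (k : ℕ) :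
    ENNReal.ofReal (3 / 2 + ((k + 1 : ℕ) / α) * (1 - 3 / 2 * α)) ≤
      (ENNReal.ofReal α)⁻¹ * (1 + k * (1 - ENNReal.ofReal α)) := by
  have hk : (0 : ℝ) ≤ k := k.cast_nonneg
  rw [← ENNReal.ofReal_one, ← ENNReal.ofReal_sub _ hα0.le, ← ENNReal.ofReal_natCast,
    ← ENNReal.ofReal_mul hk, ← ENNReal.ofReal_add zero_le_one (by nlinarith),
    ← ENNReal.ofReal_inv_of_pos hα0, ← ENNReal.ofReal_mul (by positivity)]
  apply ENNReal.ofReal_le_ofReal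
  rw [← sub_nonneg]
  have : α⁻¹ * (1 + k * (1 - α)) - (3 / 2 + ((k + 1 : ℕ) / α) * (1 - 3 / 2 * α)) = k / 2 := by
    push_cast
    field_simp
    ring
  rw [this]
  positivity

theorem stmt_3 {Ω : Type*} [MeasurableSpace Ω] (μ : Measure Ω) [IsProbabilityMeasure μ]
    (T : Ω → ℕ) (hT : Measurable T) (hTpos : ∀ ω, 1 ≤ T ω) (m : ℕ) (hm : 1 ≤ m)
    (α : ℝ) (hα0 : 0 < α) (hα1 : α < 1)
    (hfa : ∀ ℓ : ℕ, μ {ω | T ω ≤ ℓ + m ∧ ℓ < T ω} ≤ ENNReal.ofReal α * μ {ω | ℓ < T ω}) :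
    ENNReal.ofReal (3 / 2 + (m / α) * (1 - (3 / 2) * α)) ≤ ∫⁻ ω, (T ω : ℝ≥0∞) ∂μ := by
  set a := ENNReal.ofReal α
  set p : ℕ → ℝ≥0∞ := fun n => μ {ω | n < T ω}
  have hstep (ℓ : ℕ) : (1 - a) * p ℓ ≤ p (ℓ + m) := by
    refine one_sub_mul_measure_le_of_measure_diff_le ?_
    convert hfa ℓ using 2
    ext ω
    simp [and_comm]
  have hanti : Antitone p := fun i j hij => measure_mono fun ω hω => hij.trans_lt hω
  have hp0 : p 0 = 1 := by simp [p, show ∀ ω, 0 < T ω from hTpos]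
  obtain ⟨k, rfl⟩ : ∃ k, m = k + 1 := ⟨m - 1, by omega⟩
  have hpm : 1 - a ≤ p k := by
    simpa [hp0] using (hstep 0).trans (hanti (by omega : k ≤ 0 + (k + 1)))
  rw [lintegral_natCast_eq_tsum_measure_lt μ hT]
  calc ENNReal.ofReal (3 / 2 + ((k + 1 : ℕ) / α) * (1 - 3 / 2 * α))
      ≤ a⁻¹ * (1 + k * (1 - a)) := ofReal_le_inv_mul_one_add_mul_one_sub hα0 hα1 k
    _ ≤ a⁻¹ * ∑ i ∈ Finset.range (k + 1), p i := by
        gcongr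
        simpa [hp0, nsmul_eq_mul] using
          (add_le_add le_rfl (nsmul_le_nsmul_right hpm k)).trans
            (add_nsmul_le_sum_range_succ_of_antitone hanti k)
    _ = (1 - (1 - a))⁻¹ * ∑ i ∈ Finset.range (k + 1), p i := by
        rw [ENNReal.sub_sub_cancel one_ne_top (ENNReal.ofReal_le_one.mpr hα1.le)]
    _ ≤ ∑' n, p n := inv_one_sub_mul_sum_range_le_tsum hstep
end

section
/- If T satisfies the local false alarm constraint P(T \le \ell + m \mid T > \ell) \le \alpha for all \ell \ge 0, then \sum_{i=0}^{m-1} P(T > i) \ge (3/2)\alpha + (1 - (3/2)\alpha) m. -/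
/-!
Since `T ≥ 1`, the constraint at `ℓ = 0` reads `P(T ≤ m) ≤ α`, so `P(T > i) ≥ 1 - α` for
`1 ≤ i ≤ m - 1`, while `P(T > 0) = 1`. Hence the sum is at least `1 + (m - 1)(1 - α)`, which
exceeds `(3/2)α + (1 - (3/2)α) m` by `α (m - 1) / 2 ≥ 0`.
-/

open MeasureTheory ENNReal

section

variable {Ω : Type*} [MeasurableSpace Ω] {μ : Measure Ω}

lemma one_sub_measure_le_measure_compl [IsProbabilityMeasure μ] (s : Set Ω) :
    1 - μ s ≤ μ sᶜ := by
  rw [← measure_univ (μ := μ)]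
  exact tsub_le_iff_left.2 (measure_univ_le_add_compl s)

lemma one_sub_le_measure_lt_of_measure_le [IsProbabilityMeasure μ] {T : Ω → ℕ}
    {m i : ℕ} {a : ℝ≥0∞} (hTm : μ {ω | T ω ≤ m} ≤ a) (hi : i ≤ m) :
    1 - a ≤ μ {ω | i < T ω} := by
  have hTi : μ {ω | T ω ≤ i} ≤ a :=
    (measure_mono fun ω (hω : T ω ≤ i) => hω.trans hi).trans hTm
  calc 1 - a ≤ 1 - μ {ω | T ω ≤ i} := tsub_le_tsub_left hTi 1
    _ ≤ μ {ω | T ω ≤ i}ᶜ := one_sub_measure_le_measure_compl _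
    _ = μ {ω | i < T ω} := by simp only [Set.compl_ofPred, not_le]

end

lemma ofReal_le_one_add_mul_ofReal_one_sub {α : ℝ} (hα : 0 ≤ α) (n : ℕ) :
    ENNReal.ofReal ((3 / 2) * α + (1 - (3 / 2) * α) * ((n + 1 : ℕ) : ℝ)) ≤
      1 + n * ENNReal.ofReal (1 - α) :=
  calc ENNReal.ofReal ((3 / 2) * α + (1 - (3 / 2) * α) * ((n + 1 : ℕ) : ℝ))
      ≤ ENNReal.ofReal (1 + n * (1 - α)) := by
        apply ENNReal.ofReal_le_ofReal
        push_cast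
        nlinarith [mul_nonneg hα n.cast_nonneg]
    _ ≤ 1 + n * ENNReal.ofReal (1 - α) := by
        rw [← ofReal_one, ← ofReal_natCast, ← ENNReal.ofReal_mul n.cast_nonneg]
        exact ofReal_add_le

theorem stmt_5_general {Ω : Type*} [MeasurableSpace Ω] (μ : Measure Ω) [IsProbabilityMeasure μ]
    (T : Ω → ℕ) (hTpos : ∀ ω, 1 ≤ T ω) (m : ℕ) (hm : 1 ≤ m)
    (α : ℝ) (hα0 : 0 < α)
    (hfa : ∀ ℓ : ℕ, μ {ω | T ω ≤ ℓ + m ∧ ℓ < T ω} ≤ ENNReal.ofReal α * μ {ω | ℓ < T ω}) :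
    ENNReal.ofReal ((3 / 2) * α + (1 - (3 / 2) * α) * m) ≤
      ∑ i ∈ Finset.range m, μ {ω | i < T ω} := by
  have hpos : {ω | 0 < T ω} = Set.univ := Set.eq_univ_of_forall hTpos
  have hTm : μ {ω | T ω ≤ m} ≤ ENNReal.ofReal α := by
    simpa only [zero_add, hpos, Set.ofPred_and, Set.inter_univ, measure_univ, mul_one] using hfa 0
  obtain ⟨n, rfl⟩ := Nat.exists_eq_add_of_le' hm
  calc ENNReal.ofReal ((3 / 2) * α + (1 - (3 / 2) * α) * ((n + 1 : ℕ) : ℝ))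
      ≤ 1 + n * ENNReal.ofReal (1 - α) := ofReal_le_one_add_mul_ofReal_one_sub hα0.le n
    _ ≤ μ {ω | 0 < T ω} + ∑ i ∈ Finset.range n, μ {ω | i + 1 < T ω} := by
        rw [hpos, measure_univ, ENNReal.ofReal_sub _ hα0.le, ofReal_one]
        gcongr
        simpa only [Finset.card_range, nsmul_eq_mul] using
          Finset.card_nsmul_le_sum (Finset.range n) _ _ fun i hi =>
            one_sub_le_measure_lt_of_measure_le hTm
              (Nat.succ_le_succ (Finset.mem_range.1 hi).le)
    _ = ∑ i ∈ Finset.range (n + 1), μ {ω | i < T ω} := by rw [Finset.sum_range_succ', add_comm]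

theorem stmt_5 {Ω : Type*} [MeasurableSpace Ω] (μ : Measure Ω) [IsProbabilityMeasure μ]
    (T : Ω → ℕ) (hT : Measurable T) (hTpos : ∀ ω, 1 ≤ T ω) (m : ℕ) (hm : 1 ≤ m)
    (α : ℝ) (hα0 : 0 < α) (hα1 : α < 1)
    (hfa : ∀ ℓ : ℕ, μ {ω | T ω ≤ ℓ + m ∧ ℓ < T ω} ≤ ENNReal.ofReal α * μ {ω | ℓ < T ω}) :
    ENNReal.ofReal ((3 / 2) * α + (1 - (3 / 2) * α) * m) ≤
      ∑ i ∈ Finset.range m, μ {ω | i < T ω} :=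
  stmt_5_general μ T hTpos m hm α hα0 hfa
end
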